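/- For any finite sets U, U' of reduced words, the multi-cylinders C¹_U and C¹_{U'} are equal if and only if U and U' are related by the equivalence relation generated by elementary reductions (removal of an element having a proper prefix in the set, or replacing the full set u|^1 of one-letter extensions of a word u by u itself). -/

import Mathlib

open List

variable {A : Type*} [Fintype A] [DecidableEq A]

/-- The formal inverse of a letter in `A ∪ A⁻¹`, encoded as `A × Bool`. -/
def Linv (x : A × Bool) : A × Bool := (x.1, !x.2)

/-- A finite word is reduced if no letter is followed by its inverse. -/
def RedWord (w : List (A × Bool)) : Prop := w.Chain' (fun x y => y ≠ Linv x)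

/-- An infinite word is reduced if no letter is followed by its inverse. -/
def InfRed (X : ℕ → A × Bool) : Prop := ∀ n, X (n + 1) ≠ Linv (X n)

/-- The boundary `∂F(A)`: the set of infinite reduced words. -/
abbrev Bdry (A : Type*) := {X : ℕ → A × Bool // InfRed X}

/-- The prefix of length `n` of an infinite word. -/
def wpre (X : ℕ → A × Bool) (n : ℕ) : List (A × Bool) := (List.range n).map X

/-- The cylinder `C¹_u`: infinite reduced words having `u` as a prefix. -/
def Cyl (u : List (A × Bool)) : Set (Bdry A) := {X | wpre X.val u.length = u}

/-- The multi-cylinder `C¹_U` for a finite set `U` of words. -/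
def CylS (U : Finset (List (A × Bool))) : Set (Bdry A) := ⋃ u ∈ U, Cyl u

/-- `u|^k` : the set of reduced words obtained from `u` by appending `k` letters. -/
def extW (u : List (A × Bool)) (k : ℕ) : Set (List (A × Bool)) :=
  {v | RedWord v ∧ u <+: v ∧ v.length = u.length + k}

/-- The elementary reduction relation `U ↘ U'` on finite sets of reduced words. -/
def Step (U U' : Finset (List (A × Bool))) : Prop :=
  (∀ w ∈ U, RedWord w) ∧ (∀ w ∈ U', RedWord w) ∧
    ((∃ ui uj, ui ∈ U ∧ uj ∈ U ∧ ui ≠ uj ∧ ui <+: uj ∧ U' = U.erase uj) ∨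
     (∃ u E, u ∉ U ∧ (∀ v, v ∈ E ↔ v ∈ extW u 1) ∧ E ⊆ U ∧ U' = (U \ E) ∪ {u}))

/-! Every elementary reduction preserves the multi-cylinder, since `C¹_u` is the disjoint union of
the cylinders of the one-letter extensions of `u`. Conversely, fix `n` larger than every word
length. Erasing words that have a proper prefix in the set and expanding short words into their
one-letter extensions (a process terminating by a weight argument) relates `U` to the set of
reduced words of length `n` whose cylinder lies in `C¹_U`, which depends only on `C¹_U`. -/

section

omit [Fintype A] [DecidableEq A]

lemma ne_linv_self (x : A × Bool) : x ≠ Linv x := by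
  simp [Linv, Prod.ext_iff]

lemma length_wpre (X : ℕ → A × Bool) (n : ℕ) : (wpre X n).length = n := by
  simp [wpre]

lemma take_wpre (X : ℕ → A × Bool) {m n : ℕ} (h : m ≤ n) : (wpre X n).take m = wpre X m := by
  simp [wpre, ← List.map_take, List.take_range, Nat.min_eq_left h]

lemma wpre_succ (X : ℕ → A × Bool) (n : ℕ) : wpre X (n + 1) = wpre X n ++ [X n] := by
  simp [wpre, List.range_succ]

lemma InfRed.redWord_wpre {X : ℕ → A × Bool} (hX : InfRed X) (n : ℕ) : RedWord (wpre X n) :=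
  (List.isChain_map X).2 ((List.isChain_range _ n).2 fun m _ => hX m)

lemma mem_cyl {u : List (A × Bool)} {X : Bdry A} : X ∈ Cyl u ↔ wpre X.val u.length = u :=
  Iff.rfl

lemma prefix_of_mem_cyl {u v : List (A × Bool)} {X : Bdry A} (hu : X ∈ Cyl u) (hv : X ∈ Cyl v)
    (hle : u.length ≤ v.length) : u <+: v := by
  rw [mem_cyl] at hu hv
  rw [← hu, ← hv, ← take_wpre _ hle]
  exact List.take_prefix _ _

lemma cyl_anti {u v : List (A × Bool)} (h : u <+: v) : Cyl v ⊆ Cyl u := by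
  intro X hX
  rw [mem_cyl] at hX ⊢
  rw [← take_wpre _ h.length_le, hX]
  exact (List.prefix_iff_eq_take.mp h).symm

lemma cyl_eq_iUnion_extW (u : List (A × Bool)) : Cyl u = ⋃ v ∈ extW u 1, Cyl v := by
  refine subset_antisymm (fun X hX => ?_) (Set.iUnion₂_subset fun v hv => cyl_anti hv.2.1)
  refine Set.mem_iUnion₂.2
    ⟨wpre X.val (u.length + 1), ⟨X.2.redWord_wpre _, ?_, length_wpre _ _⟩, ?_⟩
  · rw [wpre_succ, mem_cyl.1 hX]
    exact List.prefix_append _ _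
  · rw [mem_cyl, length_wpre]

/-- Extending `u` by repeating its last letter forever. -/
lemma cyl_nonempty {u : List (A × Bool)} (hu : RedWord u) (hne : u ≠ []) : (Cyl u).Nonempty := by
  set X : ℕ → A × Bool := fun i => u.getD i (u.getLast hne)
  have hX_lt : ∀ i (h : i < u.length), X i = u[i] := fun i h => by simp [X, h]
  have hX_ge : ∀ i, u.length - 1 ≤ i → X i = u.getLast hne := fun i h => by
    rcases lt_or_ge i u.length with hi | hi
    · rw [hX_lt i hi, List.getLast_eq_getElem]; congr 1; omega
    · simp [X, hi]
  refine ⟨⟨X, fun n => ?_⟩, ?_⟩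
  · rcases lt_or_ge (n + 1) u.length with h | h
    · rw [hX_lt _ h, hX_lt n (by omega)]
      exact List.isChain_iff_getElem.1 hu n h
    · rw [hX_ge n (by omega), hX_ge (n + 1) (by omega)]
      exact ne_linv_self _
  · refine List.ext_getElem (length_wpre _ _) fun i h _ => ?_
    rw [length_wpre] at h
    simp [wpre, hX_lt i h]

lemma cylS_singleton (u : List (A × Bool)) : CylS {u} = Cyl u := by
  simp [CylS]

lemma cylS_eq_cyl_of_mem_iff {u : List (A × Bool)} {E : Finset (List (A × Bool))}
    (hE : ∀ v, v ∈ E ↔ v ∈ extW u 1) : CylS E = Cyl u := by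
  rw [cyl_eq_iUnion_extW]
  simp only [CylS, hE]

end

section

omit [Fintype A]

lemma cylS_union (U V : Finset (List (A × Bool))) : CylS (U ∪ V) = CylS U ∪ CylS V := by
  simp only [CylS, Finset.set_biUnion_union]

lemma Step.cylS_eq {U U' : Finset (List (A × Bool))} (h : Step U U') : CylS U = CylS U' := by
  obtain ⟨-, -, ⟨ui, uj, hi, hj, hne, hpre, rfl⟩ | ⟨u, E, -, hE, hEU, rfl⟩⟩ := h
  · have hsub : Cyl uj ⊆ CylS (U.erase uj) :=
      (cyl_anti hpre).trans (Set.subset_biUnion_of_mem (u := Cyl) (Finset.mem_erase.2 ⟨hne, hi⟩))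
    nth_rw 1 [← Finset.insert_erase hj]
    rw [Finset.insert_eq, cylS_union, cylS_singleton, Set.union_eq_right.2 hsub]
  · rw [cylS_union, cylS_singleton, ← cylS_eq_cyl_of_mem_iff hE, ← cylS_union,
      Finset.sdiff_union_of_subset hEU]

lemma Relation.EqvGen.cylS_eq {U U' : Finset (List (A × Bool))} (h : Relation.EqvGen Step U U') :
    CylS U = CylS U' :=
  (InvImage.equivalence _ CylS eq_equivalence).eqvGen_iff.1 (h.mono fun _ _ => Step.cylS_eq)

lemma step_erase {U : Finset (List (A × Bool))} (hU : ∀ w ∈ U, RedWord w) {ui uj : List (A × Bool)}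
    (hi : ui ∈ U) (hj : uj ∈ U) (hne : ui ≠ uj) (hpre : ui <+: uj) : Step U (U.erase uj) :=
  ⟨hU, fun w hw => hU w (Finset.mem_of_mem_erase hw), Or.inl ⟨ui, uj, hi, hj, hne, hpre, rfl⟩⟩

end

section

omit [DecidableEq A]

noncomputable def levelWords (n : ℕ) (S : Set (Bdry A)) : Finset (List (A × Bool)) :=
  ((List.finite_length_eq (A × Bool) n).subset
    fun v (hv : RedWord v ∧ v.length = n ∧ Cyl v ⊆ S) => hv.2.1).toFinset

lemma mem_levelWords {n : ℕ} {S : Set (Bdry A)} {v : List (A × Bool)} :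
    v ∈ levelWords n S ↔ RedWord v ∧ v.length = n ∧ Cyl v ⊆ S :=
  Set.Finite.mem_toFinset _

lemma levelWords_cylS_of_length_eq {n : ℕ} (hn : 0 < n) {U : Finset (List (A × Bool))}
    (hU : ∀ u ∈ U, RedWord u) (hlen : ∀ u ∈ U, u.length = n) : levelWords n (CylS U) = U := by
  ext v
  rw [mem_levelWords]
  refine ⟨fun ⟨hv, hvn, hsub⟩ => ?_, fun hv => ⟨hU v hv, hlen v hv, Set.subset_biUnion_of_mem hv⟩⟩
  obtain ⟨X, hXv⟩ := cyl_nonempty hv (List.ne_nil_of_length_pos (hvn ▸ hn))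
  obtain ⟨u, hu, hXu⟩ := Set.mem_iUnion₂.1 (hsub hXv)
  have huv : u <+: v := prefix_of_mem_cyl hXu hXv (by rw [hlen u hu, hvn])
  rwa [← huv.eq_of_length (by rw [hlen u hu, hvn])]

noncomputable def oneExt (u : List (A × Bool)) : Finset (List (A × Bool)) :=
  ((List.finite_length_eq (A × Bool) (u.length + 1)).subset
    fun v (hv : v ∈ extW u 1) => hv.2.2).toFinset

lemma mem_oneExt {u v : List (A × Bool)} : v ∈ oneExt u ↔ v ∈ extW u 1 :=
  Set.Finite.mem_toFinset _

end

lemma card_oneExt_le (u : List (A × Bool)) :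
    (oneExt u).card ≤ 2 * Fintype.card A := by
  have hsub : oneExt u ⊆ Finset.univ.image fun x => u ++ [x] := by
    intro v hv
    obtain ⟨-, ⟨t, rfl⟩, ht⟩ := mem_oneExt.1 hv
    obtain ⟨x, rfl⟩ := List.length_eq_one_iff.1 (by simpa using ht)
    exact Finset.mem_image_of_mem _ (Finset.mem_univ x)
  calc (oneExt u).card ≤ (Finset.univ : Finset (A × Bool)).card :=
        (Finset.card_le_card hsub).trans Finset.card_image_le
    _ = 2 * Fintype.card A := by simp [mul_comm]

/-- The base `2|A| + 1` exceeds the number of one-letter extensions of a word, so replacing a word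
shorter than `n` by its extensions lowers the weight. -/
def weight (n : ℕ) (U : Finset (List (A × Bool))) : ℕ :=
  ∑ u ∈ U, (2 * Fintype.card A + 1) ^ (n - u.length)

lemma weight_erase_lt {n : ℕ} {U : Finset (List (A × Bool))} {u : List (A × Bool)} (hu : u ∈ U) :
    weight n (U.erase u) < weight n U := by
  rw [weight, weight, ← Finset.sum_erase_add U _ hu]
  exact Nat.lt_add_of_pos_right (Nat.pow_pos (by omega))

lemma weight_oneExt_lt {n : ℕ} {u : List (A × Bool)} (hlt : u.length < n) :
    weight n (oneExt u) < (2 * Fintype.card A + 1) ^ (n - u.length) := by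
  have hterm : ∀ v ∈ oneExt u, (2 * Fintype.card A + 1) ^ (n - v.length)
      = (2 * Fintype.card A + 1) ^ (n - u.length - 1) := fun v hv => by
    rw [(mem_oneExt.1 hv).2.2, Nat.sub_add_eq]
  rw [weight, Finset.sum_congr rfl hterm, Finset.sum_const, smul_eq_mul,
    show n - u.length = n - u.length - 1 + 1 by omega, pow_succ, Nat.add_sub_cancel, mul_comm]
  exact Nat.mul_lt_mul_of_pos_left (Nat.lt_succ_of_le (card_oneExt_le u)) (Nat.pow_pos (by omega))

lemma weight_erase_union_oneExt_lt {n : ℕ} {U : Finset (List (A × Bool))} {u : List (A × Bool)}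
    (hu : u ∈ U) (hlt : u.length < n) : weight n (U.erase u ∪ oneExt u) < weight n U := by
  have hunion := Finset.sum_union_inter (s₁ := U.erase u) (s₂ := oneExt u)
    (f := fun v => (2 * Fintype.card A + 1) ^ (n - v.length))
  have hsplit := Finset.sum_erase_add U (fun v => (2 * Fintype.card A + 1) ^ (n - v.length)) hu
  have := weight_oneExt_lt (n := n) hlt
  simp only [weight] at this ⊢
  omega

lemma step_expand {U : Finset (List (A × Bool))} (hU : ∀ w ∈ U, RedWord w) {u : List (A × Bool)}
    (hu : u ∈ U) (hmax : ∀ v ∈ U, u <+: v → v = u) : Step (U.erase u ∪ oneExt u) U := by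
  have hlen : ∀ v ∈ oneExt u, v.length = u.length + 1 := fun v hv => (mem_oneExt.1 hv).2.2
  have hdisj : Disjoint (U.erase u) (oneExt u) := Finset.disjoint_right.2 fun v hv hvU => by
    have := hmax v (Finset.mem_of_mem_erase hvU) (mem_oneExt.1 hv).2.1
    have := hlen v hv
    simp_all
  refine ⟨fun w hw => ?_, hU, Or.inr ⟨u, oneExt u, fun hu' => ?_, fun _ => mem_oneExt,
    Finset.subset_union_right, ?_⟩⟩
  · rcases Finset.mem_union.1 hw with hw | hw
    exacts [hU w (Finset.mem_of_mem_erase hw), (mem_oneExt.1 hw).1]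
  · rcases Finset.mem_union.1 hu' with h | h
    exacts [Finset.notMem_erase u U h, by simpa using hlen u h]
  · rw [Finset.union_sdiff_right, Finset.sdiff_eq_self_of_disjoint hdisj, Finset.union_comm,
      ← Finset.insert_eq, Finset.insert_erase hu]

theorem eqvGen_levelWords_cylS {n : ℕ} (hn : 0 < n) (U : Finset (List (A × Bool)))
    (hU : ∀ u ∈ U, RedWord u) (hlen : ∀ u ∈ U, u.length ≤ n) :
    Relation.EqvGen Step U (levelWords n (CylS U)) := by
  by_cases hpair : ∃ ui ∈ U, ∃ uj ∈ U, ui ≠ uj ∧ ui <+: uj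
  · obtain ⟨ui, hi, uj, hj, hne, hpre⟩ := hpair
    have hstep := step_erase hU hi hj hne hpre
    have := weight_erase_lt (n := n) hj
    have hrec := eqvGen_levelWords_cylS hn (U.erase uj) hstep.2.1
      fun w hw => hlen w (Finset.mem_of_mem_erase hw)
    rw [← hstep.cylS_eq] at hrec
    exact (Relation.EqvGen.rel _ _ hstep).trans _ _ _ hrec
  push Not at hpair
  by_cases hshort : ∃ u ∈ U, u.length < n
  · obtain ⟨u, hu, hlt⟩ := hshort
    have hstep := step_expand hU hu fun v hv huv =>
      by_contra fun h => hpair u hu v hv (Ne.symm h) huv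
    have := weight_erase_union_oneExt_lt hu hlt
    have hrec := eqvGen_levelWords_cylS hn (U.erase u ∪ oneExt u) hstep.1 fun w hw => by
      rcases Finset.mem_union.1 hw with hw | hw
      exacts [hlen w (Finset.mem_of_mem_erase hw), (mem_oneExt.1 hw).2.2 ▸ hlt]
    rw [hstep.cylS_eq] at hrec
    exact (Relation.EqvGen.rel _ _ hstep).symm.trans _ _ _ hrec
  push Not at hshort
  rw [levelWords_cylS_of_length_eq hn hU fun u hu => (hlen u hu).antisymm (hshort u hu)]
  exact Relation.EqvGen.refl U
termination_by weight n U

theorem multicylinder_eq_iff_eqvGen_general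
    (U U' : Finset (List (A × Bool)))
    (hU : ∀ w ∈ U, RedWord w) (hU' : ∀ w ∈ U', RedWord w) :
    CylS U = CylS U' ↔ Relation.EqvGen Step U U' := by
  refine ⟨fun hcyl => ?_, Relation.EqvGen.cylS_eq⟩
  set n := (U ∪ U').sup List.length + 1
  have hn : 0 < n := Nat.succ_pos _
  have hlen : ∀ w ∈ U ∪ U', w.length ≤ n := fun w hw => (Finset.le_sup hw).trans (Nat.le_succ _)
  have h₁ := eqvGen_levelWords_cylS hn U hU fun w hw => hlen w (Finset.mem_union_left _ hw)
  have h₂ := eqvGen_levelWords_cylS hn U' hU' fun w hw => hlen w (Finset.mem_union_right _ hw)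
  rw [hcyl] at h₁
  exact h₁.trans _ _ _ h₂.symm

theorem multicylinder_eq_iff_eqvGen (hA : 2 ≤ Fintype.card A)
    (U U' : Finset (List (A × Bool)))
    (hU : ∀ w ∈ U, RedWord w) (hU' : ∀ w ∈ U', RedWord w) :
    CylS U = CylS U' ↔ Relation.EqvGen Step U U' :=
  multicylinder_eq_iff_eqvGen_general U U' hU hU'
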